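/- Let P₁ and P₂ be posets satisfying the upper bound property and the lower bound property, and let h : P₁ → P₂ be a closed homomorphism. Then the kernel of h is a congruence on the partial lattice P₁: there exists a congruence Θ on K₁ = WithBot (WithTop P₁) such that for all a, b ∈ P₁, (↑a, ↑b) ∈ Θ if and only if h a = h b. -/
import Mathlib


/-- A poset satisfies the upper bound property if every pair of elements having
an upper bound has a least upper bound. -/
def UBP (P : Type*) [PartialOrder P] : Prop :=
  ∀ a b : P, (∃ u, a ≤ u ∧ b ≤ u) → ∃ c, IsLUB {a, b} c

/-- A poset satisfies the lower bound property if every pair of elements having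
a lower bound has a greatest lower bound. -/
def LBP (P : Type*) [PartialOrder P] : Prop :=
  ∀ a b : P, (∃ l, l ≤ a ∧ l ≤ b) → ∃ c, IsGLB {a, b} c

/-- The canonical embedding of `P` into its two-point extension `WithBot (WithTop P)`. -/
def emb {P : Type*} (a : P) : WithBot (WithTop P) := ((a : WithTop P) : WithBot (WithTop P))

/-- A congruence on a (lattice-ordered) poset `K`: an equivalence relation compatible
with binary suprema and binary infima, expressed via `IsLUB` and `IsGLB`. -/
def IsCongruence {K : Type*} [PartialOrder K] (Θ : K → K → Prop) : Prop :=
  Equivalence Θ ∧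
  (∀ a b c d sa sb : K, Θ a b → Θ c d → IsLUB {a, c} sa → IsLUB {b, d} sb → Θ sa sb) ∧
  (∀ a b c d ia ib : K, Θ a b → Θ c d → IsGLB {a, c} ia → IsGLB {b, d} ib → Θ ia ib)

/-- A closed homomorphism between posets with the upper and lower bound properties:
it preserves existing least upper bounds and greatest lower bounds, and it reflects
the existence of upper bounds and of lower bounds. -/
def IsClosedHom {P₁ P₂ : Type*} [PartialOrder P₁] [PartialOrder P₂] (h : P₁ → P₂) : Prop :=
  (∀ a b c : P₁, IsLUB {a, b} c → IsLUB {h a, h b} (h c)) ∧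
  (∀ a b c : P₁, IsGLB {a, b} c → IsGLB {h a, h b} (h c)) ∧
  (∀ a b : P₁, (∃ u, h a ≤ u ∧ h b ≤ u) → ∃ u, a ≤ u ∧ b ≤ u) ∧
  (∀ a b : P₁, (∃ l, l ≤ h a ∧ l ≤ h b) → ∃ l, l ≤ a ∧ l ≤ b)

set_option linter.unusedSectionVars false
section Helpers

variable {P Q : Type*} [PartialOrder P] [PartialOrder Q]


def Hmap (h : P → Q) : WithBot (WithTop P) → WithBot (WithTop Q) :=
  WithBot.map (WithTop.map h)

@[simp] lemma Hmap_bot (h : P → Q) : Hmap h ⊥ = ⊥ := rfl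
@[simp] lemma Hmap_top (h : P → Q) : Hmap h ⊤ = ⊤ := rfl
@[simp] lemma Hmap_emb (h : P → Q) (a : P) : Hmap h (emb a) = emb (h a) := rfl

@[simp] lemma emb_le_emb {a b : P} : emb a ≤ emb b ↔ a ≤ b := by
  simp [emb]

lemma emb_ne_bot (a : P) : emb a ≠ ⊥ := by simp [emb]
lemma emb_ne_top (a : P) : emb a ≠ ⊤ := by
  simp [emb]

lemma K_cases (x : WithBot (WithTop P)) : x = ⊥ ∨ x = ⊤ ∨ ∃ a, x = emb a := by
  induction x using WithBot.recBotCoe with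
  | bot => exact Or.inl rfl
  | coe x =>
    induction x using WithTop.recTopCoe with
    | top => exact Or.inr (Or.inl rfl)
    | coe a => exact Or.inr (Or.inr ⟨a, rfl⟩)

lemma isLUB_bot_left {K : Type*} [PartialOrder K] [OrderBot K] (y : K) :
    IsLUB ({⊥, y} : Set K) y := by
  constructor
  · rintro z (rfl | rfl)
    · exact bot_le
    · exact le_rfl
  · intro u hu; exact hu (by simp)

lemma isLUB_top_left {K : Type*} [PartialOrder K] [OrderTop K] (y : K) :
    IsLUB ({⊤, y} : Set K) ⊤ := by
  constructor
  · rintro z (rfl | rfl)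
    · exact le_rfl
    · exact le_top
  · intro u hu; exact hu (by simp)

lemma isGLB_top_left {K : Type*} [PartialOrder K] [OrderTop K] (y : K) :
    IsGLB ({⊤, y} : Set K) y := by
  constructor
  · rintro z (rfl | rfl)
    · exact le_top
    · exact le_rfl
  · intro u hu; exact hu (by simp)

lemma isGLB_bot_left {K : Type*} [PartialOrder K] [OrderBot K] (y : K) :
    IsGLB ({⊥, y} : Set K) ⊥ := by
  constructor
  · rintro z (rfl | rfl)
    · exact le_rfl
    · exact bot_le
  · intro u hu; exact hu (by simp)

lemma isLUB_emb {a b c : P} (hc : IsLUB {a, b} c) :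
    IsLUB {emb a, emb b} (emb c) := by
  constructor
  · rintro z (rfl | rfl)
    · exact emb_le_emb.2 (hc.1 (by simp))
    · exact emb_le_emb.2 (hc.1 (by simp))
  · intro u hu
    rcases K_cases u with rfl | rfl | ⟨v, rfl⟩
    · exact absurd (hu (Set.mem_insert _ _)) (by simp [emb])
    · exact le_top
    · refine emb_le_emb.2 (hc.2 ?_)
      rintro z (rfl | rfl)
      · exact emb_le_emb.1 (hu (Set.mem_insert _ _))
      · exact emb_le_emb.1 (hu (by simp))

lemma isGLB_emb {a b c : P} (hc : IsGLB {a, b} c) :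
    IsGLB {emb a, emb b} (emb c) := by
  constructor
  · rintro z (rfl | rfl)
    · exact emb_le_emb.2 (hc.1 (by simp))
    · exact emb_le_emb.2 (hc.1 (by simp))
  · intro u hu
    rcases K_cases u with rfl | rfl | ⟨v, rfl⟩
    · exact bot_le
    · exact absurd (hu (Set.mem_insert _ _)) (by simp [emb])
    · refine emb_le_emb.2 (hc.2 ?_)
      rintro z (rfl | rfl)
      · exact emb_le_emb.1 (hu (Set.mem_insert _ _))
      · exact emb_le_emb.1 (hu (by simp))

lemma isLUB_emb_top {a b : P} (hab : ¬ ∃ u, a ≤ u ∧ b ≤ u) :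
    IsLUB {emb a, emb b} (⊤ : WithBot (WithTop P)) := by
  constructor
  · rintro z (rfl | rfl) <;> exact le_top
  · intro u hu
    rcases K_cases u with rfl | rfl | ⟨v, rfl⟩
    · exact absurd (hu (Set.mem_insert _ _)) (by simp [emb])
    · exact le_rfl
    · exact absurd ⟨v, emb_le_emb.1 (hu (Set.mem_insert _ _)),
        emb_le_emb.1 (hu (by simp))⟩ hab

lemma isGLB_emb_bot {a b : P} (hab : ¬ ∃ l, l ≤ a ∧ l ≤ b) :
    IsGLB {emb a, emb b} (⊥ : WithBot (WithTop P)) := by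
  constructor
  · rintro z (rfl | rfl) <;> exact bot_le
  · intro u hu
    rcases K_cases u with rfl | rfl | ⟨v, rfl⟩
    · exact le_rfl
    · exact absurd (hu (Set.mem_insert _ _)) (by simp [emb])
    · exact absurd ⟨v, emb_le_emb.1 (hu (Set.mem_insert _ _)),
        emb_le_emb.1 (hu (by simp))⟩ hab

end Helpers

section Main

variable {P Q : Type*} [PartialOrder P] [PartialOrder Q]


lemma Hmap_isLUB {h : P → Q} (hh : IsClosedHom h) {x y s : WithBot (WithTop P)}
    (hs : IsLUB {x, y} s) : IsLUB {Hmap h x, Hmap h y} (Hmap h s) := by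
  rcases K_cases x with rfl | rfl | ⟨a, rfl⟩
  · -- x = ⊥ ⇒ s = y
    rw [hs.unique (isLUB_bot_left y)]
    simpa using isLUB_bot_left (Hmap h y)
  · obtain rfl : s = ⊤ := le_antisymm le_top (hs.1 (Set.mem_insert _ _))
    simpa using isLUB_top_left (Hmap h y)
  · rcases K_cases y with rfl | rfl | ⟨b, rfl⟩
    · rw [Set.pair_comm] at hs ⊢
      obtain rfl : s = emb a := hs.unique (isLUB_bot_left _)
      simpa using isLUB_bot_left (Hmap h (emb a))
    · rw [Set.pair_comm] at hs ⊢
      obtain rfl : s = ⊤ := le_antisymm le_top (hs.1 (Set.mem_insert _ _))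
      simpa using isLUB_top_left (Hmap h (emb a))
    · rcases K_cases s with rfl | rfl | ⟨c, rfl⟩
      · exact absurd (hs.1 (Set.mem_insert _ _)) (by simp [emb])
      · have hno : ¬ ∃ u, a ≤ u ∧ b ≤ u := by
          rintro ⟨u, hu1, hu2⟩
          have : (⊤ : WithBot (WithTop P)) ≤ emb u := by
            refine hs.2 ?_
            rintro z (rfl | rfl)
            · exact emb_le_emb.2 hu1
            · exact emb_le_emb.2 hu2
          exact emb_ne_top u (le_antisymm le_top this)
        have hno2 : ¬ ∃ u, h a ≤ u ∧ h b ≤ u := fun hu => hno (hh.2.2.1 a b hu)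
        simpa using isLUB_emb_top hno2
      · have hc : IsLUB {a, b} c := by
          constructor
          · rintro z (rfl | rfl)
            · exact emb_le_emb.1 (hs.1 (Set.mem_insert _ _))
            · exact emb_le_emb.1 (hs.1 (by simp))
          · intro u hu
            refine emb_le_emb.1 (hs.2 ?_)
            rintro z (rfl | rfl)
            · exact emb_le_emb.2 (hu (Set.mem_insert _ _))
            · exact emb_le_emb.2 (hu (by simp))
        simpa using isLUB_emb (hh.1 a b c hc)

lemma Hmap_isGLB {h : P → Q} (hh : IsClosedHom h) {x y s : WithBot (WithTop P)}
    (hs : IsGLB {x, y} s) : IsGLB {Hmap h x, Hmap h y} (Hmap h s) := by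
  rcases K_cases x with rfl | rfl | ⟨a, rfl⟩
  · obtain rfl : s = ⊥ := le_antisymm (hs.1 (Set.mem_insert _ _)) bot_le
    simpa using isGLB_bot_left (Hmap h y)
  · rw [hs.unique (isGLB_top_left y)]
    simpa using isGLB_top_left (Hmap h y)
  · rcases K_cases y with rfl | rfl | ⟨b, rfl⟩
    · rw [Set.pair_comm] at hs ⊢
      obtain rfl : s = ⊥ := le_antisymm (hs.1 (Set.mem_insert _ _)) bot_le
      simpa using isGLB_bot_left (Hmap h (emb a))
    · rw [Set.pair_comm] at hs ⊢
      obtain rfl : s = emb a := hs.unique (isGLB_top_left _)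
      simpa using isGLB_top_left (Hmap h (emb a))
    · rcases K_cases s with rfl | rfl | ⟨c, rfl⟩
      · have hno : ¬ ∃ l, l ≤ a ∧ l ≤ b := by
          rintro ⟨l, hl1, hl2⟩
          have : emb l ≤ (⊥ : WithBot (WithTop P)) := by
            refine hs.2 ?_
            rintro z (rfl | rfl)
            · exact emb_le_emb.2 hl1
            · exact emb_le_emb.2 hl2
          exact emb_ne_bot l (le_antisymm this bot_le)
        have hno2 : ¬ ∃ l, l ≤ h a ∧ l ≤ h b := fun hl => hno (hh.2.2.2 a b hl)
        simpa using isGLB_emb_bot hno2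
      · exact absurd (hs.1 (Set.mem_insert _ _)) (by simp [emb])
      · have hc : IsGLB {a, b} c := by
          constructor
          · rintro z (rfl | rfl)
            · exact emb_le_emb.1 (hs.1 (Set.mem_insert _ _))
            · exact emb_le_emb.1 (hs.1 (by simp))
          · intro u hu
            refine emb_le_emb.1 (hs.2 ?_)
            rintro z (rfl | rfl)
            · exact emb_le_emb.2 (hu (Set.mem_insert _ _))
            · exact emb_le_emb.2 (hu (by simp))
        simpa using isGLB_emb (hh.2.1 a b c hc)

end Main

/-- If `h : P₁ → P₂` is a closed homomorphism between posets with the upper and lower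
bound properties, then the kernel of `h` is a congruence on the partial lattice `P₁`:
there is a congruence `Θ` on `K₁ = WithBot (WithTop P₁)` with `(↑a, ↑b) ∈ Θ ↔ h a = h b`
for all `a, b ∈ P₁`. -/
theorem kernel_is_congruence {P₁ P₂ : Type*} [PartialOrder P₁] [PartialOrder P₂]
    (hUBP₁ : UBP P₁) (hLBP₁ : LBP P₁) (hUBP₂ : UBP P₂) (hLBP₂ : LBP P₂)
    (h : P₁ → P₂) (hh : IsClosedHom h) :
    ∃ Θ : WithBot (WithTop P₁) → WithBot (WithTop P₁) → Prop,
      IsCongruence Θ ∧ ∀ a b : P₁, Θ (emb a) (emb b) ↔ h a = h b := by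
  refine ⟨fun x y => Hmap h x = Hmap h y,
    ⟨⟨fun _ => rfl, Eq.symm, Eq.trans⟩, ?_, ?_⟩, ?_⟩
  · intro a b c d sa sb hab hcd hsa hsb
    have h1 := Hmap_isLUB hh hsa
    have h2 := Hmap_isLUB hh hsb
    rw [hab, hcd] at h1
    exact h1.unique h2
  · intro a b c d ia ib hab hcd hia hib
    have h1 := Hmap_isGLB hh hia
    have h2 := Hmap_isGLB hh hib
    rw [hab, hcd] at h1
    exact h1.unique h2
  · intro a b
    simp only [Hmap_emb]
    constructor
    · intro hab
      simpa [emb] using hab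
    · intro hab; rw [hab]
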